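/- arXiv:1502.04604 — 4 statements merged into one kernel-verified Lean document; each statement's English description precedes it below -/
import Mathlib

section
/- Let n ≥ 1 and set k = (n−1)/2 if n is odd and k = n/2 if n is even. For all x = (x_1,…,x_n) ∈ ℝ^n, the antisymmetric multivariate cosine function satisfies cos⁻_{ρ₂}(x) = (−1)^k · 2^{n(n−1)} · ∏_{i=1}^n cos(π x_i/2) · ∏_{1 ≤ i < j ≤ n} sin(π(x_i + x_j)/2) · sin(π(x_i − x_j)/2), where ρ₂ = (n−1/2, n−3/2, …, 3/2, 1/2). -/
/-!
Since `ρ₂ i = (n - 1 - i) + 1 / 2`, the entry `cos (π ρ₂ᵢ xⱼ)` equals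
`cos (π xⱼ / 2) · V_{n-1-i} (cos π xⱼ)`, where `V_m` is the Chebyshev polynomial of the third
kind, of degree `m` and leading coefficient `2 ^ m`. Hence `cos⁻_{ρ₂} x` is `∏ cos (π xⱼ / 2)`
times a Vandermonde-type determinant in the `cos π xⱼ`, namely
`2 ^ (n choose 2) ∏_{i<j} (cos π xᵢ - cos π xⱼ)`. Each difference is
`-2 sin (π (xᵢ + xⱼ) / 2) sin (π (xᵢ - xⱼ) / 2)`, and `(-1) ^ (n choose 2) = (-1) ^ ⌊n / 2⌋`.
-/

open Real Finset

/-- The antisymmetric multivariate cosine function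
`cos⁻_λ(x) = Σ_{σ ∈ S_n} sgn(σ) ∏_{i=1}^n cos(π λ_{σ(i)} x_i)`. -/
noncomputable def cosMinus (n : ℕ) (lam x : Fin n → ℝ) : ℝ :=
  ∑ σ : Equiv.Perm (Fin n),
    ((Equiv.Perm.sign σ : ℤ) : ℝ) * ∏ i : Fin n, Real.cos (Real.pi * lam (σ i) * x i)

theorem Fin.prod_Ioi_rev {M : Type*} [CommMonoid M] {n : ℕ} (f : Fin n → Fin n → M) :
    ∏ i : Fin n, ∏ j ∈ Ioi i, f i.rev j.rev = ∏ i : Fin n, ∏ j ∈ Ioi i, f j i := by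
  calc ∏ i, ∏ j ∈ Ioi i, f i.rev j.rev
      = ∏ i, ∏ j ∈ Ioi i.rev, f i j.rev :=
        Fintype.prod_equiv Fin.revPerm _ _ fun i => by simp
    _ = ∏ i, ∏ j ∈ Iio i, f i j := by
        refine Finset.prod_congr rfl fun i _ => ?_
        refine Finset.prod_nbij' Fin.rev Fin.rev (fun j hj => ?_) (fun j hj => ?_)
          (fun j _ => Fin.rev_rev j) (fun j _ => Fin.rev_rev j) (fun j _ => rfl)
        · simpa [Fin.rev_lt_iff] using hj
        · simpa [Fin.rev_lt_rev] using hj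
    _ = ∏ i, ∏ j ∈ Ioi i, f j i :=
        Finset.prod_comm' fun _ _ => by simp [and_comm]

theorem Fin.prod_pow_val {M : Type*} [CommMonoid M] (n : ℕ) (a : M) :
    ∏ i : Fin n, a ^ (i : ℕ) = a ^ n.choose 2 := by
  rw [prod_pow_eq_pow_sum, Fin.sum_univ_eq_sum_range (fun i => i), sum_range_id,
    Nat.choose_two_right]

theorem Fin.prod_prod_Ioi_const {M : Type*} [CommMonoid M] (n : ℕ) (a : M) :
    ∏ i : Fin n, ∏ _j ∈ Ioi i, a = a ^ n.choose 2 := by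
  rw [← Fin.prod_pow_val]
  refine Fintype.prod_equiv Fin.revPerm _ _ fun i => ?_
  rw [Finset.prod_const, Fin.card_Ioi, Fin.revPerm_apply, Fin.val_rev]
  congr 1
  omega

theorem neg_one_pow_choose_two {M : Type*} [Monoid M] [HasDistribNeg M] (n : ℕ) :
    (-1 : M) ^ n.choose 2 = (-1) ^ (n / 2) := by
  induction n using Nat.twoStepInduction with
  | zero => simp
  | one => simp
  | more n ih _ =>
    have hchoose : (n + 2).choose 2 = n.choose 2 + (2 * n + 1) := by
      have h₁ : (n + 2).choose 2 = (n + 1) + (n + 1).choose 2 := by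
        simpa using Nat.choose_succ_succ' (n + 1) 1
      have h₂ : (n + 1).choose 2 = n + n.choose 2 := by
        simpa using Nat.choose_succ_succ' n 1
      omega
    rw [hchoose, pow_add, ih, Odd.neg_one_pow ⟨n, rfl⟩, Nat.add_div_right n two_pos, pow_succ]

theorem Matrix.det_eval_matrixOfPolynomials {R : Type*} [CommRing R] {n : ℕ}
    (v : Fin n → R) (p : Fin n → Polynomial R) (h_deg : ∀ i, (p i).natDegree ≤ i) :
    (Matrix.of fun i j => (p j).eval (v i)).det
      = (Matrix.vandermonde v).det * ∏ i, (p i).coeff i := by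
  rw [eval_matrixOfPolynomials_eq_vandermonde_mul_matrixOfPolynomials v p h_deg, det_mul,
    det_of_isUpperTriangular (matrixOfPolynomials_blockTriangular p h_deg)]
  rfl

namespace Polynomial.Chebyshev

variable (R : Type*) [CommRing R]

/-- Chebyshev polynomials of the third kind:
`(V ℝ n).eval (cos θ) * cos (θ / 2) = cos ((n + 1 / 2) * θ)`. -/
noncomputable def V (n : ℕ) : R[X] :=
  U R n - U R (n - 1)

theorem V_zero : V R 0 = 1 := by
  simp [V]

theorem V_one : V R 1 = 2 * X - 1 := by
  simp [V]

theorem V_add_two (n : ℕ) : V R (n + 2) = 2 * X * V R (n + 1) - V R n := by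
  simp only [V, Nat.cast_add, Nat.cast_ofNat, Nat.cast_one]
  rw [U_add_two, show (n : ℤ) + 2 - 1 = n + 1 by ring, U_eq R ((n : ℤ) + 1),
    show (n : ℤ) + 1 - 1 = n by ring, show (n : ℤ) + 1 - 2 = n - 1 by ring]
  ring

variable {R} [IsDomain R] [NeZero (2 : R)]

theorem natDegree_V_le (n : ℕ) : (V R n).natDegree ≤ n := by
  refine (natDegree_sub_le _ _).trans (max_le (natDegree_U_natCast R n).le ?_)
  rw [natDegree_U]
  omega

theorem coeff_V_self (n : ℕ) : (V R n).coeff n = 2 ^ n := by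
  have hU : (U R (n - 1)).coeff n = 0 := by
    cases n with
    | zero => simp
    | succ m =>
      refine coeff_eq_zero_of_natDegree_lt ?_
      rw [natDegree_U]
      omega
  have hlead := coeff_natDegree (p := U R n)
  rw [natDegree_U_natCast, leadingCoeff_U_natCast] at hlead
  rw [V, coeff_sub, hU, sub_zero, hlead]

theorem V_real_cos (θ : ℝ) (n : ℕ) :
    (V ℝ n).eval (cos θ) * cos (θ / 2) = cos ((n + 1 / 2) * θ) := by
  induction n using Nat.twoStepInduction with
  | zero => simp [V_zero, div_eq_inv_mul]
  | one =>
    have := cos_add_cos (3 / 2 * θ) (θ / 2)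
    simp only [V_one, eval_sub, eval_mul, eval_ofNat, eval_X, eval_one]
    ring_nf at this ⊢
    linarith
  | more n ih₀ ih₁ =>
    have := cos_add_cos ((n + 5 / 2) * θ) ((n + 1 / 2) * θ)
    simp only [V_add_two, eval_sub, eval_mul, eval_ofNat, eval_X]
    push_cast at ih₁ ⊢
    rw [sub_mul, mul_assoc, ih₀, ih₁]
    ring_nf at this ⊢
    linarith

theorem det_eval_V_rev {n : ℕ} (v : Fin n → R) :
    (Matrix.of fun i j : Fin n => (V R i.rev).eval (v j)).det
      = 2 ^ n.choose 2 * ∏ i : Fin n, ∏ j ∈ Ioi i, (v i - v j) := by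
  have hrev : (Matrix.of fun i j : Fin n => (V R i.rev).eval (v j)).transpose.submatrix
      Fin.revPerm Fin.revPerm = Matrix.of fun i j : Fin n => (V R j).eval (v i.rev) := by
    ext
    simp only [Matrix.submatrix_apply, Matrix.transpose_apply, Matrix.of_apply,
      Fin.revPerm_apply, Fin.rev_rev]
  rw [← Matrix.det_transpose, ← Matrix.det_submatrix_equiv_self Fin.revPerm, hrev,
    Matrix.det_eval_matrixOfPolynomials _ _ fun i => natDegree_V_le i, Matrix.det_vandermonde,
    Fin.prod_Ioi_rev fun a b => v b - v a]
  simp only [coeff_V_self, Fin.prod_pow_val]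
  ring

end Polynomial.Chebyshev

open Polynomial.Chebyshev

theorem cosMinus_eq_det (n : ℕ) (lam x : Fin n → ℝ) :
    cosMinus n lam x = (Matrix.of fun i j => cos (π * lam i * x j)).det := by
  rw [Matrix.det_apply']
  rfl

theorem antisymmetric_cos_rho2_general (n : ℕ) (k : ℕ)
    (hk : (Odd n → 2 * k + 1 = n) ∧ (Even n → 2 * k = n)) (x : Fin n → ℝ) :
    cosMinus n (fun i => (n : ℝ) - ((i : ℕ) : ℝ) - 1 / 2) x
      = (-1 : ℝ) ^ k * (2 : ℝ) ^ (n * (n - 1)) *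
        (∏ i : Fin n, Real.cos (Real.pi * x i / 2)) *
        ∏ i : Fin n, ∏ j ∈ Finset.Ioi i,
          Real.sin (Real.pi * (x i + x j) / 2) * Real.sin (Real.pi * (x i - x j) / 2) := by
  have hk_eq : k = n / 2 := by
    rcases Nat.even_or_odd n with h | h
    · have := hk.2 h; omega
    · have := hk.1 h; omega
  have hexp : n * (n - 1) = n.choose 2 + n.choose 2 := by
    have := Nat.div_two_mul_two_of_even (Nat.even_mul_pred_self n)
    rw [Nat.choose_two_right]
    omega
  have hentry (i j : Fin n) : cos (π * ((n : ℝ) - (i : ℕ) - 1 / 2) * x j)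
      = cos (π * x j / 2) * (V ℝ i.rev).eval (cos (π * x j)) := by
    rw [mul_comm (cos _), V_real_cos, Fin.val_rev, Nat.cast_sub i.isLt]
    push_cast
    ring_nf
  have hdiff (i j : Fin n) : cos (π * x i) - cos (π * x j)
      = -2 * (sin (π * (x i + x j) / 2) * sin (π * (x i - x j) / 2)) := by
    rw [cos_sub_cos]
    ring_nf
  calc cosMinus n (fun i => (n : ℝ) - ((i : ℕ) : ℝ) - 1 / 2) x
      = (Matrix.of fun i j => cos (π * x j / 2) * (V ℝ i.rev).eval (cos (π * x j))).det := by
        rw [cosMinus_eq_det]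
        simp only [hentry]
    _ = (∏ j, cos (π * x j / 2)) *
          (2 ^ n.choose 2 * ∏ i, ∏ j ∈ Ioi i, (cos (π * x i) - cos (π * x j))) := by
        rw [← det_eval_V_rev]
        exact Matrix.det_mul_row _ _
    _ = _ := by
        simp only [hdiff, prod_mul_distrib, Fin.prod_prod_Ioi_const]
        rw [neg_pow, neg_one_pow_choose_two, ← hk_eq, hexp, pow_add]
        ring

theorem antisymmetric_cos_rho2 (n : ℕ) (hn : 1 ≤ n) (k : ℕ)
    (hk : (Odd n → 2 * k + 1 = n) ∧ (Even n → 2 * k = n)) (x : Fin n → ℝ) :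
    cosMinus n (fun i => (n : ℝ) - ((i : ℕ) : ℝ) - 1 / 2) x
      = (-1 : ℝ) ^ k * (2 : ℝ) ^ (n * (n - 1)) *
        (∏ i : Fin n, Real.cos (Real.pi * x i / 2)) *
        ∏ i : Fin n, ∏ j ∈ Finset.Ioi i,
          Real.sin (Real.pi * (x i + x j) / 2) * Real.sin (Real.pi * (x i - x j) / 2) :=
  antisymmetric_cos_rho2_general n k hk x
end

section
/- Let n ≥ 1 and let k, k' ∈ P^{++}, i.e., k = (k_1,…,k_n) and k' = (k'_1,…,k'_n) are integer vectors with k_1 > k_2 > … > k_n ≥ 0 and k'_1 > k'_2 > … > k'_n ≥ 0. Then ∫_{F(S̃_n^aff)} cos⁻_k(x) cos⁻_{k'}(x) dx = h_k · δ_{k,k'}, where dx is n-dimensional Lebesgue measure. -/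
open Real Finset MeasureTheory

/-- The fundamental domain `F(S̃_n^aff) = {x ∈ ℝ^n : 1 ≥ x_1 ≥ x_2 ≥ … ≥ x_n ≥ 0}`. -/
def Fdom (n : ℕ) : Set (Fin n → ℝ) :=
  {x | (∀ i j : Fin n, i ≤ j → x j ≤ x i) ∧ ∀ i : Fin n, 0 ≤ x i ∧ x i ≤ 1}

/-!
The integrand `cos⁻_k · cos⁻_k'` is invariant under permutations of the coordinates, each factor
changing by `sgn σ`. Up to the null set where two coordinates agree, the unit cube is the disjoint
union of the `n!` permuted copies of the fundamental domain, so the integral over the fundamental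
domain is `1 / n!` times the integral over the cube. There the double sum over `σ, τ` splits into
products of the one-dimensional integrals `∫₀¹ cos (π a t) cos (π b t) dt = [a = b] h_a`, and since
`k` and `k'` are strictly decreasing, `k ∘ σ = k' ∘ τ` forces `k = k'` and `σ = τ`: what survives
is `n!` copies of `h_k`.
-/

theorem integral_cos_int_mul_pi_mul (m : ℤ) :
    ∫ x in (0 : ℝ)..1, cos (m * π * x) = if m = 0 then 1 else 0 := by
  split_ifs with hm
  · simp [hm]
  · have hmπ : (m : ℝ) * π ≠ 0 := mul_ne_zero (Int.cast_ne_zero.2 hm) pi_ne_zero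
    simp [intervalIntegral.integral_comp_mul_left cos hmπ, sin_int_mul_pi]

theorem integral_cos_nat_mul_cos_nat (a b : ℕ) :
    ∫ x in (0 : ℝ)..1, cos (π * a * x) * cos (π * b * x)
      = if a = b then (if a = 0 then 1 else 1 / 2) else 0 := by
  have product_to_sum (x : ℝ) : cos (π * a * x) * cos (π * b * x)
      = (cos ((((a : ℤ) - b : ℤ) : ℝ) * π * x)
        + cos ((((a : ℤ) + b : ℤ) : ℝ) * π * x)) / 2 := by
    push_cast
    rw [show ((a : ℝ) - b) * π * x = π * a * x - π * b * x by ring,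
      show ((a : ℝ) + b) * π * x = π * a * x + π * b * x by ring, cos_sub, cos_add]
    ring
  have hint (c : ℝ) : IntervalIntegrable (fun x => cos (c * π * x)) volume 0 1 :=
    (by fun_prop : Continuous fun x => cos (c * π * x)).intervalIntegrable 0 1
  simp only [product_to_sum]
  rw [intervalIntegral.integral_div, intervalIntegral.integral_add (hint _) (hint _),
    integral_cos_int_mul_pi_mul, integral_cos_int_mul_pi_mul]
  by_cases hab : a = b
  · subst hab
    split_ifs <;> simp_all
  · rw [if_neg hab, if_neg (by omega), if_neg (by omega)]
    norm_num

section Permutations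

theorem Equiv.Perm.intCast_sign_mul_self {ι R : Type*} [Fintype ι] [DecidableEq ι] [Ring R]
    (σ : Equiv.Perm ι) : ((Equiv.Perm.sign σ : ℤ) : R) * (Equiv.Perm.sign σ : ℤ) = 1 := by
  rw [← Int.cast_mul, ← Units.val_mul, Int.units_mul_self, Units.val_one, Int.cast_one]

variable {ι α : Type*} [LinearOrder ι] [LinearOrder α]

theorem Equiv.Perm.eq_one_of_strictAnti_of_eq_comp [Finite ι] {f g : ι → α} (hf : StrictAnti f)
    (hg : StrictAnti g) {ρ : Equiv.Perm ι} (h : f = g ∘ ρ) : ρ = 1 := by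
  subst h
  have hρ : StrictMono ρ := fun i j hij => hg.lt_iff_gt.1 (hf hij)
  exact Equiv.ext fun i => congrFun hρ.eq_id i

theorem StrictAnti.eq_and_eq_of_comp_perm_eq [Finite ι] {k k' : ι → α}
    (hk : StrictAnti k) (hk' : StrictAnti k') {σ τ : Equiv.Perm ι} (h : k ∘ σ = k' ∘ τ) :
    k = k' ∧ σ = τ := by
  have hστ : τ * σ⁻¹ = 1 := Equiv.Perm.eq_one_of_strictAnti_of_eq_comp hk hk' <| funext fun j => by
    simpa using congrFun h (σ⁻¹ j)
  obtain rfl : σ = τ := (mul_inv_eq_one.1 hστ).symm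
  exact ⟨σ.surjective.injective_comp_right h, rfl⟩

variable [Fintype ι] {R : Type*} [CommRing R]

theorem sign_mul_sign_mul_prod_ite_eq [DecidableEq ι] [DecidableEq α] {k k' : ι → α}
    (hk : StrictAnti k) (hk' : StrictAnti k') (c : α → R) (σ τ : Equiv.Perm ι) :
    ((Equiv.Perm.sign σ : ℤ) : R) * (Equiv.Perm.sign τ : ℤ) *
        ∏ i, (if k (σ i) = k' (τ i) then c (k (σ i)) else 0)
      = if k = k' ∧ σ = τ then ∏ i, c (k i) else 0 := by
  by_cases h : ∀ i, k (σ i) = k' (τ i)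
  · obtain ⟨rfl, rfl⟩ := hk.eq_and_eq_of_comp_perm_eq hk' (funext h)
    rw [if_pos ⟨rfl, rfl⟩, σ.intCast_sign_mul_self, one_mul]
    simp [Equiv.prod_comp σ fun i => c (k i)]
  · obtain ⟨i, hi⟩ := not_forall.1 h
    rw [if_neg fun ⟨hkk, hστ⟩ => hi (by rw [hkk, hστ]),
      prod_eq_zero (mem_univ i) (if_neg hi), mul_zero]

theorem sum_sum_sign_mul_sign_mul_prod_ite_eq [DecidableEq ι] [DecidableEq α] {k k' : ι → α}
    (hk : StrictAnti k) (hk' : StrictAnti k') (c : α → R) :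
    ∑ σ : Equiv.Perm ι, ∑ τ : Equiv.Perm ι,
      ((Equiv.Perm.sign σ : ℤ) : R) * (Equiv.Perm.sign τ : ℤ) *
        ∏ i, (if k (σ i) = k' (τ i) then c (k (σ i)) else 0)
      = (Fintype.card ι).factorial * ((∏ i, c (k i)) * if k = k' then 1 else 0) := by
  simp only [sign_mul_sign_mul_prod_ite_eq hk hk']
  by_cases hkk : k = k' <;> simp [hkk, Fintype.card_perm]

end Permutations

theorem volume_setOf_not_injective (ι : Type*) [Fintype ι] :
    volume {x : ι → ℝ | ¬ Function.Injective x} = 0 := by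
  classical
  have hsub : {x : ι → ℝ | ¬ Function.Injective x} ⊆
      ⋃ p : ι × ι, {x | p.1 ≠ p.2 ∧ x p.1 = x p.2} := by
    intro x hx
    obtain ⟨i, j, hxij, hij⟩ := by simpa [Function.Injective] using hx
    exact Set.mem_iUnion.2 ⟨(i, j), hij, hxij⟩
  refine measure_mono_null hsub (measure_iUnion_null fun ⟨i, j⟩ => ?_)
  rcases eq_or_ne i j with rfl | hij
  · simp
  · let L : (ι → ℝ) →ₗ[ℝ] ℝ := LinearMap.proj (R := ℝ) (φ := fun _ => ℝ) i - LinearMap.proj j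
    have hker : {x : ι → ℝ | i ≠ j ∧ x i = x j} = LinearMap.ker L := by
      ext x
      simp [L, sub_eq_zero, hij]
    have hL : LinearMap.ker L ≠ ⊤ := fun htop => by
      have : Pi.single i (1 : ℝ) ∈ LinearMap.ker L := htop ▸ Submodule.mem_top
      simp [L, Pi.single_eq_of_ne hij.symm] at this
    simpa [hker] using Measure.addHaar_submodule volume _ hL

theorem setIntegral_preimage_comp_perm {ι : Type*} [Fintype ι] (σ : Equiv.Perm ι)
    (s : Set (ι → ℝ)) {f : (ι → ℝ) → ℝ} (hf : ∀ x, f (x ∘ σ) = f x) :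
    ∫ x in (· ∘ σ) ⁻¹' s, f x = ∫ x in s, f x := by
  let e : (ι → ℝ) ≃ᵐ (ι → ℝ) := MeasurableEquiv.arrowCongr' σ.symm (MeasurableEquiv.refl ℝ)
  have he : MeasurePreserving e := volume_preserving_arrowCongr' _ _ (.id _)
  have he_apply : ⇑e = (· ∘ σ) := rfl
  simpa [he_apply, hf] using he.setIntegral_preimage_emb e.measurableEmbedding f s

theorem setIntegral_Icc_prod {ι : Type*} [Fintype ι] (a b : ι → ℝ) (G : ι → ℝ → ℝ) :
    ∫ x in Set.Icc a b, ∏ i, G i (x i) = ∏ i, ∫ t in Set.Icc (a i) (b i), G i t := by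
  rw [← Set.pi_univ_Icc, volume_pi, Measure.restrict_pi_pi,
    integral_fintype_prod_eq_prod (ι := ι) G]

theorem isClosed_Fdom (n : ℕ) : IsClosed (Fdom n) := by
  simp only [Fdom, Set.ofPred_and, Set.ofPred_forall]
  exact (isClosed_iInter fun i => isClosed_iInter fun j => isClosed_iInter fun _ =>
      isClosed_le (by fun_prop) (by fun_prop)).inter
    (isClosed_iInter fun i => (isClosed_le (by fun_prop) (by fun_prop)).inter
      (isClosed_le (by fun_prop) (by fun_prop)))

theorem Icc_eq_iUnion_preimage_Fdom (n : ℕ) :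
    Set.Icc (0 : Fin n → ℝ) 1 = ⋃ σ : Equiv.Perm (Fin n), (· ∘ σ) ⁻¹' Fdom n := by
  ext x
  simp only [Set.mem_Icc, Set.mem_iUnion, Set.mem_preimage, Fdom, Set.mem_ofPred_eq,
    Function.comp_apply, Pi.le_def, Pi.zero_apply, Pi.one_apply]
  constructor
  · rintro ⟨h0, h1⟩
    refine ⟨Tuple.sort x * Fin.revPerm, fun i j hij => ?_, fun i => ⟨h0 _, h1 _⟩⟩
    simpa using Tuple.monotone_sort x (Fin.rev_le_rev.2 hij)
  · rintro ⟨σ, -, hσ⟩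
    exact ⟨fun i => by simpa using (hσ (σ⁻¹ i)).1, fun i => by simpa using (hσ (σ⁻¹ i)).2⟩

theorem aedisjoint_preimage_Fdom (n : ℕ) :
    Pairwise (Function.onFun (AEDisjoint volume)
      fun σ : Equiv.Perm (Fin n) => (· ∘ σ) ⁻¹' Fdom n) := by
  intro σ τ hστ
  refine measure_mono_null ?_ (volume_setOf_not_injective (Fin n))
  rintro x ⟨hσ, hτ⟩ hx
  apply hστ
  have strictAnti_of_mem {ρ : Equiv.Perm (Fin n)} (hρ : x ∘ ρ ∈ Fdom n) : StrictAnti (x ∘ ρ) :=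
    fun i j hij => (hρ.1 i j hij.le).lt_of_ne fun h => hij.ne (ρ.injective (hx h)).symm
  have := Equiv.Perm.eq_one_of_strictAnti_of_eq_comp (strictAnti_of_mem hσ)
    (strictAnti_of_mem hτ) (ρ := τ⁻¹ * σ) (by ext; simp)
  exact (inv_mul_eq_one.1 this).symm

theorem setIntegral_Icc_eq_factorial_mul_setIntegral_Fdom {n : ℕ} {f : (Fin n → ℝ) → ℝ}
    (hf : IntegrableOn f (Set.Icc 0 1)) (hsym : ∀ (σ : Equiv.Perm (Fin n)) x, f (x ∘ σ) = f x) :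
    ∫ x in Set.Icc 0 1, f x = n.factorial * ∫ x in Fdom n, f x := by
  rw [Icc_eq_iUnion_preimage_Fdom] at hf ⊢
  rw [integral_iUnion_ae (fun σ => ((isClosed_Fdom n).preimage (by fun_prop)).measurableSet
      |>.nullMeasurableSet) (aedisjoint_preimage_Fdom n) hf, tsum_fintype]
  simp [setIntegral_preimage_comp_perm _ _ (hsym _), Fintype.card_perm]

theorem continuous_cosMinus (n : ℕ) (lam : Fin n → ℝ) : Continuous (cosMinus n lam) := by
  unfold cosMinus
  fun_prop

theorem cosMinus_comp_perm (n : ℕ) (lam x : Fin n → ℝ) (σ : Equiv.Perm (Fin n)) :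
    cosMinus n lam (x ∘ σ) = Equiv.Perm.sign σ * cosMinus n lam x := by
  rw [cosMinus, ← Equiv.sum_comp (Equiv.mulRight σ), cosMinus, mul_sum]
  refine sum_congr rfl fun τ _ => ?_
  rw [← Equiv.prod_comp σ fun j => cos (π * lam (τ j) * x j)]
  simp only [Equiv.coe_mulRight, Equiv.Perm.sign_mul, Units.val_mul, Int.cast_mul,
    Equiv.Perm.coe_mul, Function.comp_apply]
  ring

theorem cosMinus_mul_cosMinus_comp_perm (n : ℕ) (lam mu x : Fin n → ℝ) (σ : Equiv.Perm (Fin n)) :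
    cosMinus n lam (x ∘ σ) * cosMinus n mu (x ∘ σ) = cosMinus n lam x * cosMinus n mu x := by
  rw [cosMinus_comp_perm, cosMinus_comp_perm, mul_mul_mul_comm, σ.intCast_sign_mul_self, one_mul]

theorem cosMinus_mul_cosMinus (n : ℕ) (lam mu x : Fin n → ℝ) :
    cosMinus n lam x * cosMinus n mu x = ∑ σ : Equiv.Perm (Fin n), ∑ τ : Equiv.Perm (Fin n),
      ((Equiv.Perm.sign σ : ℤ) : ℝ) * (Equiv.Perm.sign τ : ℤ) *
        ∏ i, cos (π * lam (σ i) * x i) * cos (π * mu (τ i) * x i) := by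
  simp only [cosMinus, sum_mul_sum, prod_mul_distrib]
  exact sum_congr rfl fun σ _ => sum_congr rfl fun τ _ => by ring

theorem setIntegral_Icc_cosMinus_mul_cosMinus (n : ℕ) (k k' : Fin n → ℕ) :
    ∫ x in Set.Icc 0 1, cosMinus n (fun i => (k i : ℝ)) x * cosMinus n (fun i => (k' i : ℝ)) x
      = ∑ σ : Equiv.Perm (Fin n), ∑ τ : Equiv.Perm (Fin n),
          ((Equiv.Perm.sign σ : ℤ) : ℝ) * (Equiv.Perm.sign τ : ℤ) *
            ∏ i, (if k (σ i) = k' (τ i) then (if k (σ i) = 0 then 1 else 1 / 2) else 0) := by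
  simp only [cosMinus_mul_cosMinus]
  rw [integral_finsetSum _ fun σ _ => (by fun_prop : Continuous _).integrableOn_Icc]
  refine sum_congr rfl fun σ _ => ?_
  rw [integral_finsetSum _ fun τ _ => (by fun_prop : Continuous _).integrableOn_Icc]
  refine sum_congr rfl fun τ _ => ?_
  rw [integral_const_mul,
    setIntegral_Icc_prod 0 1 fun i t => cos (π * k (σ i) * t) * cos (π * k' (τ i) * t)]
  congr 1
  refine prod_congr rfl fun i _ => ?_
  rw [Pi.zero_apply, Pi.one_apply, integral_Icc_eq_integral_Ioc,
    ← intervalIntegral.integral_of_le zero_le_one]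
  exact integral_cos_nat_mul_cos_nat _ _

theorem continuous_orthogonality_antisym_integer_general (n : ℕ)
    (k k' : Fin n → ℕ)
    (hk : ∀ i j : Fin n, i < j → k j < k i)
    (hk' : ∀ i j : Fin n, i < j → k' j < k' i) :
    ∫ x in Fdom n,
        cosMinus n (fun i => (k i : ℝ)) x * cosMinus n (fun i => (k' i : ℝ)) x
      = (∏ i : Fin n, if k i = 0 then (1 : ℝ) else 1 / 2) *
          (if k = k' then (1 : ℝ) else 0) := by
  have hf : Continuous fun x =>
      cosMinus n (fun i => (k i : ℝ)) x * cosMinus n (fun i => (k' i : ℝ)) x :=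
    (continuous_cosMinus n _).mul (continuous_cosMinus n _)
  have h_cube := setIntegral_Icc_eq_factorial_mul_setIntegral_Fdom hf.integrableOn_Icc
    (fun σ x => cosMinus_mul_cosMinus_comp_perm n (fun i => (k i : ℝ)) (fun i => (k' i : ℝ)) x σ)
  rw [setIntegral_Icc_cosMinus_mul_cosMinus, sum_sum_sign_mul_sign_mul_prod_ite_eq
    (fun i j => hk i j) (fun i j => hk' i j) fun a => if a = 0 then (1 : ℝ) else 1 / 2,
    Fintype.card_fin] at h_cube
  exact mul_left_cancel₀ (Nat.cast_ne_zero.2 n.factorial_ne_zero) h_cube.symm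

theorem continuous_orthogonality_antisym_integer (n : ℕ) (hn : 1 ≤ n)
    (k k' : Fin n → ℕ)
    (hk : ∀ i j : Fin n, i < j → k j < k i)
    (hk' : ∀ i j : Fin n, i < j → k' j < k' i) :
    ∫ x in Fdom n,
        cosMinus n (fun i => (k i : ℝ)) x * cosMinus n (fun i => (k' i : ℝ)) x
      = (∏ i : Fin n, if k i = 0 then (1 : ℝ) else 1 / 2) *
          (if k = k' then (1 : ℝ) else 0) :=
  continuous_orthogonality_antisym_integer_general n k k' hk hk'
end

section
/- Let n ≥ 1 and let k, k' ∈ P^{+}, i.e., k = (k_1,…,k_n) and k' = (k'_1,…,k'_n) are integer vectors with k_1 ≥ k_2 ≥ … ≥ k_n ≥ 0 and k'_1 ≥ k'_2 ≥ … ≥ k'_n ≥ 0. Then ∫_{F(S̃_n^aff)} cos⁺_{k+ρ}(x) cos⁺_{k'+ρ}(x) dx = 2^{−n} · H_k · δ_{k,k'}, where ρ = (1/2,…,1/2) and dx is n-dimensional Lebesgue measure. -/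
/-!
The integrand is invariant under permutations of the coordinates, and the images of the
fundamental domain under these permutations tile `[0,1]^n` up to the null set where two
coordinates coincide; so the integral is `1 / n!` times the integral over the cube. There each
factor `cos⁺` expands into a sum of products, Fubini splits every product into one-dimensional
integrals, and the functions `cos (π (a + 1/2) t)` are orthogonal on `[0,1]` with square norm
`1/2`. The pair `(σ, τ)` thus contributes `2⁻ⁿ` exactly when `k ∘ σ = k' ∘ τ`; for sorted
`k, k'` this forces `k = k'`, and then there are `n! · H_k` such pairs.
-/

open Real Finset MeasureTheory

/-- The symmetric multivariate cosine function
`cos⁺_λ(x) = Σ_{σ ∈ S_n} ∏_{i=1}^n cos(π λ_{σ(i)} x_i)`. -/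
noncomputable def cosPlus (n : ℕ) (lam x : Fin n → ℝ) : ℝ :=
  ∑ σ : Equiv.Perm (Fin n), ∏ i : Fin n, Real.cos (Real.pi * lam (σ i) * x i)

/-- `H_k`, the order of the stabilizer of `k` under the permutation action of `S_n`
(where `σ(k)_i = k_{σ(i)}`, i.e. `σ(k) = k ∘ σ`). -/
def Hstab {n : ℕ} {α : Type*} [DecidableEq α] (k : Fin n → α) : ℕ :=
  (Finset.univ.filter fun σ : Equiv.Perm (Fin n) => k ∘ σ = k).card

def unitCube (ι : Type*) : Set (ι → ℝ) := Set.univ.pi fun _ => Set.Icc 0 1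

theorem setIntegral_unitCube_prod {ι : Type*} [Fintype ι] (f : ι → ℝ → ℝ) :
    ∫ x in unitCube ι, ∏ i, f i (x i) = ∏ i, ∫ t in Set.Icc 0 1, f i t := by
  rw [unitCube, volume_pi, Measure.restrict_pi_pi, integral_fintype_prod_eq_prod]

theorem isCompact_unitCube (ι : Type*) : IsCompact (unitCube ι) :=
  isCompact_univ_pi fun _ => isCompact_Icc

theorem volume_setOf_apply_eq_apply {ι : Type*} [Fintype ι] {i j : ι} (hij : i ≠ j) :
    volume {x : ι → ℝ | x i = x j} = 0 := by
  classical
  let L : (ι → ℝ) →ₗ[ℝ] ℝ := LinearMap.proj (R := ℝ) (φ := fun _ : ι => ℝ) i - LinearMap.proj j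
  have hker : {x : ι → ℝ | x i = x j} = LinearMap.ker L := by
    ext x; simp [L, sub_eq_zero]
  rw [hker]
  refine Measure.addHaar_submodule _ _ fun htop => ?_
  have hsingle : Pi.single i 1 ∈ LinearMap.ker L := htop ▸ Submodule.mem_top
  simp [L, hij.symm] at hsingle

def permCoords {ι : Type*} (σ : Equiv.Perm ι) : (ι → ℝ) ≃ᵐ (ι → ℝ) :=
  MeasurableEquiv.arrowCongr' σ.symm (MeasurableEquiv.refl ℝ)

theorem coe_permCoords {ι : Type*} (σ : Equiv.Perm ι) : ⇑(permCoords σ) = (· ∘ σ) := rfl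

theorem measurePreserving_permCoords {ι : Type*} [Fintype ι] (σ : Equiv.Perm ι) :
    MeasurePreserving (permCoords σ) :=
  volume_preserving_arrowCongr' _ _ (MeasurePreserving.id volume)

theorem measurableSet_Fdom (n : ℕ) : MeasurableSet (Fdom n) := by
  have hFdom : Fdom n =
      (⋂ (i : Fin n) (j : Fin n) (_ : i ≤ j), {x | x j ≤ x i}) ∩ unitCube (Fin n) := by
    ext x
    simp only [Fdom, unitCube, Set.mem_inter_iff, Set.mem_iInter, Set.mem_ofPred_eq, Set.mem_pi,
      Set.mem_univ, Set.mem_Icc, forall_const]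
  rw [hFdom]
  exact .inter (.iInter fun i => .iInter fun j => .iInter fun _ =>
    measurableSet_le (measurable_pi_apply j) (measurable_pi_apply i))
    (.univ_pi fun _ => measurableSet_Icc)

def chamber {n : ℕ} (σ : Equiv.Perm (Fin n)) : Set (Fin n → ℝ) := permCoords σ ⁻¹' Fdom n

theorem iUnion_chamber (n : ℕ) : ⋃ σ : Equiv.Perm (Fin n), chamber σ = unitCube (Fin n) := by
  ext x
  simp only [Set.mem_iUnion, chamber, Set.mem_preimage, coe_permCoords, Fdom, unitCube, Set.mem_pi,
    Set.mem_univ, Set.mem_Icc, forall_const, Function.comp_apply, Set.mem_ofPred_eq]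
  constructor
  · rintro ⟨σ, -, hx⟩ i
    simpa using hx (σ.symm i)
  · intro hx
    -- `Tuple.sort` sorts increasingly; reversing it sorts decreasingly
    refine ⟨Fin.revPerm.trans (Tuple.sort x), fun i j hij => ?_, fun i => hx _⟩
    simpa using Tuple.monotone_sort x (Fin.rev_le_rev.mpr hij)

theorem aedisjoint_chamber (n : ℕ) :
    Pairwise (Function.onFun (AEDisjoint volume) (chamber (n := n))) := by
  intro σ τ hστ
  refine measure_mono_null ?_ (volume_setOf_not_injective (Fin n))
  rintro x ⟨hσ, hτ⟩ hx
  have hxστ := Tuple.unique_antitone (f := x) hσ.1 hτ.1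
  exact hστ <| Equiv.ext fun i => hx (congrFun hxστ i)

theorem setIntegral_chamber {n : ℕ} {g : (Fin n → ℝ) → ℝ}
    (hg : ∀ (σ : Equiv.Perm (Fin n)) x, g (x ∘ σ) = g x) (σ : Equiv.Perm (Fin n)) :
    ∫ x in chamber σ, g x = ∫ x in Fdom n, g x := by
  refine (setIntegral_congr_fun ((measurableSet_Fdom n).preimage (permCoords σ).measurable)
    fun x _ => (hg σ x).symm).trans ?_
  exact (measurePreserving_permCoords σ).setIntegral_preimage_emb
    (permCoords σ).measurableEmbedding g (Fdom n)

theorem setIntegral_unitCube_eq_factorial_mul {n : ℕ} {g : (Fin n → ℝ) → ℝ}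
    (hg : ∀ (σ : Equiv.Perm (Fin n)) x, g (x ∘ σ) = g x)
    (hg_int : IntegrableOn g (unitCube (Fin n))) :
    ∫ x in unitCube (Fin n), g x = n.factorial * ∫ x in Fdom n, g x := by
  rw [← iUnion_chamber, integral_iUnion_ae (fun σ => ?_) (aedisjoint_chamber n)
    (by rwa [iUnion_chamber]), tsum_fintype]
  · simp [setIntegral_chamber hg, Fintype.card_perm]
  · exact ((measurableSet_Fdom n).preimage (permCoords σ).measurable).nullMeasurableSet

theorem cosPlus_comp_perm {n : ℕ} (lam x : Fin n → ℝ) (σ : Equiv.Perm (Fin n)) :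
    cosPlus n lam (x ∘ σ) = cosPlus n lam x := by
  refine Fintype.sum_equiv (Equiv.mulRight σ⁻¹) _ _ fun τ => ?_
  simp only [Equiv.coe_mulRight, Equiv.Perm.coe_mul, Function.comp_apply]
  rw [← Equiv.prod_comp σ fun j => cos (π * lam (τ (σ⁻¹ j)) * x j)]
  simp

theorem continuous_cosPlus {n : ℕ} (lam : Fin n → ℝ) : Continuous (cosPlus n lam) := by
  unfold cosPlus
  fun_prop

theorem setIntegral_unitCube_cosPlus_mul_cosPlus {n : ℕ} (lam mu : Fin n → ℝ) :
    ∫ x in unitCube (Fin n), cosPlus n lam x * cosPlus n mu x =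
      ∑ σ : Equiv.Perm (Fin n), ∑ τ : Equiv.Perm (Fin n),
        ∏ i, ∫ t in Set.Icc 0 1, cos (π * lam (σ i) * t) * cos (π * mu (τ i) * t) := by
  have hterm_int : ∀ σ τ : Equiv.Perm (Fin n), IntegrableOn
      (fun x => ∏ i, cos (π * lam (σ i) * x i) * cos (π * mu (τ i) * x i)) (unitCube (Fin n)) :=
    fun σ τ => Continuous.continuousOn (by fun_prop) |>.integrableOn_compact (isCompact_unitCube _)
  simp_rw [cosPlus, sum_mul_sum, ← prod_mul_distrib]
  rw [integral_finsetSum _ fun σ _ => integrable_finsetSum _ fun τ _ => hterm_int σ τ]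
  refine sum_congr rfl fun σ _ => ?_
  rw [integral_finsetSum _ fun τ _ => hterm_int σ τ]
  exact sum_congr rfl fun τ _ =>
    setIntegral_unitCube_prod fun i t => cos (π * lam (σ i) * t) * cos (π * mu (τ i) * t)

theorem integral_cos_int_mul (m : ℤ) :
    ∫ t in (0 : ℝ)..1, cos (π * m * t) = if m = 0 then 1 else 0 := by
  split_ifs with hm
  · simp [hm]
  · have hπm : π * m ≠ 0 := mul_ne_zero pi_ne_zero (Int.cast_ne_zero.mpr hm)
    rw [intervalIntegral.integral_comp_mul_left cos hπm, integral_cos]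
    simp [mul_comm π, sin_int_mul_pi]

theorem setIntegral_cos_mul_cos_half (a b : ℕ) :
    ∫ t in Set.Icc (0 : ℝ) 1, cos (π * (a + 1 / 2) * t) * cos (π * (b + 1 / 2) * t) =
      if a = b then 2⁻¹ else 0 := by
  have hprod : ∀ t : ℝ, cos (π * (a + 1 / 2) * t) * cos (π * (b + 1 / 2) * t) =
      2⁻¹ * (cos (π * ((a - b : ℤ) : ℝ) * t) + cos (π * ((a + b + 1 : ℤ) : ℝ) * t)) := by
    intro t
    have hsub : π * ((a - b : ℤ) : ℝ) * t = π * (a + 1 / 2) * t - π * (b + 1 / 2) * t := by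
      push_cast; ring
    have hadd : π * ((a + b + 1 : ℤ) : ℝ) * t = π * (a + 1 / 2) * t + π * (b + 1 / 2) * t := by
      push_cast; ring
    rw [hsub, hadd, ← two_mul_cos_mul_cos]
    ring
  have hcont : ∀ m : ℤ, IntervalIntegrable (fun t : ℝ => cos (π * m * t)) volume 0 1 :=
    fun m => (continuous_cos.comp (continuous_const.mul continuous_id)).intervalIntegrable 0 1
  rw [integral_Icc_eq_integral_Ioc, ← intervalIntegral.integral_of_le zero_le_one]
  simp only [hprod, intervalIntegral.integral_const_mul,
    intervalIntegral.integral_add (hcont _) (hcont _), integral_cos_int_mul]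
  -- the half-integer shift keeps the frequency of the second term away from zero
  have hfreq : (a + b + 1 : ℤ) ≠ 0 := by omega
  split_ifs <;> first | omega | simp

theorem card_filter_comp_eq_comp {n : ℕ} {α : Type*} [DecidableEq α] (k : Fin n → α)
    (σ : Equiv.Perm (Fin n)) : #{τ : Equiv.Perm (Fin n) | k ∘ σ = k ∘ τ} = Hstab k := by
  refine card_equiv (Equiv.mulRight σ⁻¹) fun τ => ?_
  simp only [mem_filter, mem_univ, true_and, Equiv.coe_mulRight, Equiv.Perm.coe_mul,
    Equiv.Perm.inv_def, ← Function.comp_assoc]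
  rw [Equiv.comp_symm_eq, eq_comm]

theorem sum_sum_ite_comp_eq_comp {n : ℕ} {α R : Type*} [DecidableEq α] [Semiring R]
    (k : Fin n → α) (c : R) :
    ∑ σ : Equiv.Perm (Fin n), ∑ τ : Equiv.Perm (Fin n), (if k ∘ σ = k ∘ τ then c else 0) =
      n.factorial * Hstab k * c := by
  simp [sum_ite, card_filter_comp_eq_comp, Fintype.card_perm, mul_assoc]

theorem eq_of_antitone_of_comp_eq_comp {n : ℕ} {α : Type*} [PartialOrder α] {k k' : Fin n → α}
    (hk : Antitone k) (hk' : Antitone k') {σ τ : Equiv.Perm (Fin n)} (h : k ∘ σ = k' ∘ τ) :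
    k = k' := by
  have hk_eq : k = k' ∘ (τ * σ⁻¹) := by
    rw [Equiv.Perm.coe_mul, ← Function.comp_assoc, ← h, Equiv.Perm.inv_def, Function.comp_assoc,
      Equiv.self_comp_symm, Function.comp_id]
  have hk'_eq := Tuple.unique_antitone (f := k') (σ := τ * σ⁻¹) (τ := 1) (hk_eq ▸ hk) hk'
  rwa [← hk_eq] at hk'_eq

theorem sum_sum_ite_comp_eq_comp_of_antitone {n : ℕ} {α R : Type*} [PartialOrder α]
    [DecidableEq α] [Semiring R] {k k' : Fin n → α} (hk : Antitone k) (hk' : Antitone k') (c : R) :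
    ∑ σ : Equiv.Perm (Fin n), ∑ τ : Equiv.Perm (Fin n), (if k ∘ σ = k' ∘ τ then c else 0) =
      if k = k' then n.factorial * Hstab k * c else 0 := by
  split_ifs with h
  · subst h
    exact sum_sum_ite_comp_eq_comp k c
  · exact sum_eq_zero fun σ _ => sum_eq_zero fun τ _ =>
      if_neg fun hστ => h (eq_of_antitone_of_comp_eq_comp hk hk' hστ)

theorem continuous_orthogonality_sym_halfinteger_general (n : ℕ)
    (k k' : Fin n → ℕ)
    (hk : ∀ i j : Fin n, i ≤ j → k j ≤ k i)
    (hk' : ∀ i j : Fin n, i ≤ j → k' j ≤ k' i) :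
    ∫ x in Fdom n,
        cosPlus n (fun i => (k i : ℝ) + 1 / 2) x *
          cosPlus n (fun i => (k' i : ℝ) + 1 / 2) x
      = ((2 : ℝ) ^ n)⁻¹ * (Hstab k : ℝ) * (if k = k' then (1 : ℝ) else 0) := by
  set g : (Fin n → ℝ) → ℝ := fun x =>
    cosPlus n (fun i => (k i : ℝ) + 1 / 2) x * cosPlus n (fun i => (k' i : ℝ) + 1 / 2) x
  have hsym : ∀ (σ : Equiv.Perm (Fin n)) x, g (x ∘ σ) = g x := by
    simp [g, cosPlus_comp_perm]
  have hg_int : IntegrableOn g (unitCube (Fin n)) :=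
    (continuous_cosPlus _).mul (continuous_cosPlus _) |>.continuousOn.integrableOn_compact
      (isCompact_unitCube _)
  have hcube := setIntegral_unitCube_eq_factorial_mul hsym hg_int
  simp only [g, setIntegral_unitCube_cosPlus_mul_cosPlus, setIntegral_cos_mul_cos_half,
    Fintype.prod_ite_zero, prod_const, card_univ, Fintype.card_fin] at hcube
  have hcomp : ∀ σ τ : Equiv.Perm (Fin n), (∀ i, k (σ i) = k' (τ i)) ↔ k ∘ σ = k' ∘ τ :=
    fun σ τ => funext_iff.symm
  simp only [hcomp, sum_sum_ite_comp_eq_comp_of_antitone hk hk'] at hcube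
  refine mul_left_cancel₀ (Nat.cast_ne_zero.mpr n.factorial_ne_zero) (hcube.symm.trans ?_)
  split_ifs
  · rw [inv_pow]; ring
  · ring

theorem continuous_orthogonality_sym_halfinteger (n : ℕ) (hn : 1 ≤ n)
    (k k' : Fin n → ℕ)
    (hk : ∀ i j : Fin n, i ≤ j → k j ≤ k i)
    (hk' : ∀ i j : Fin n, i ≤ j → k' j ≤ k' i) :
    ∫ x in Fdom n,
        cosPlus n (fun i => (k i : ℝ) + 1 / 2) x *
          cosPlus n (fun i => (k' i : ℝ) + 1 / 2) x
      = ((2 : ℝ) ^ n)⁻¹ * (Hstab k : ℝ) * (if k = k' then (1 : ℝ) else 0) :=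
  continuous_orthogonality_sym_halfinteger_general n k k' hk hk'
end

section
/- (AMDCT VIII discrete orthogonality) Let N, n ≥ 1 and let k, k' ∈ D_N^−, i.e., integer vectors with N−1 ≥ k_1 > … > k_n ≥ 0 and N−1 ≥ k'_1 > … > k'_n ≥ 0. Then Σ_{r ∈ D_N^−} cos⁻_{k+ρ}(2(r_1+1/2)/(2N+1), …, 2(r_n+1/2)/(2N+1)) · cos⁻_{k'+ρ}(2(r_1+1/2)/(2N+1), …, 2(r_n+1/2)/(2N+1)) = ((2N+1)/4)^n · δ_{k,k'}, where ρ = (1/2,…,1/2). -/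
open Real Finset

/-!
Write `x_t = 2(t + 1/2)/(2N + 1)` and let `C`, `D` be the `n × N` matrices
`C i t = cos(π (k_i + 1/2) x_t)`, `D i t = cos(π (k'_i + 1/2) x_t)`. Then `cos⁻_{k+ρ}(x_r)` is the
minor of `C` on the columns `r`, so by the Cauchy–Binet formula the sum over decreasing `r` is
`det (C Dᵀ)`. The one-dimensional orthogonality of the DCT-VIII kernel gives
`(C Dᵀ) i j = (2N+1)/4 · δ(k_i, k'_j)`; since `k` and `k'` are strictly decreasing, the only
permutation contributing to this determinant is the identity, and only when `k = k'`.
-/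

open Matrix

theorem Equiv.Perm.eq_one_of_strictAnti_comp {n : ℕ} {α : Type*} [LinearOrder α]
    {f : Fin n → α} {σ : Equiv.Perm (Fin n)} (hf : StrictAnti f) (hfσ : StrictAnti (f ∘ σ)) :
    σ = 1 := by
  have hσ : StrictMono σ := fun i j hij => hf.lt_iff_gt.mp (hfσ hij)
  exact Equiv.ext fun i => hσ.apply_eq

open Classical in
theorem Finset.sum_eq_sum_strictAnti_sum_perm {n : ℕ} {α R : Type*} [LinearOrder α] [Fintype α]
    [AddCommMonoid R] (G : (Fin n → α) → R) (hG : ∀ r, ¬ Function.Injective r → G r = 0) :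
    ∑ r, G r = ∑ s ∈ univ.filter StrictAnti, ∑ τ : Equiv.Perm (Fin n), G (s ∘ τ) := by
  rw [← sum_filter_of_ne (p := Function.Injective) fun r _ hr => not_imp_comm.mp (hG r) hr,
    ← sum_product']
  symm
  refine sum_nbij (fun p => p.1 ∘ p.2) ?_ ?_ ?_ fun _ _ => rfl
  · rintro ⟨s, τ⟩ hp
    simp only [mem_product, mem_filter, mem_univ, true_and, and_true] at hp ⊢
    exact hp.injective.comp τ.injective
  · rintro ⟨s, τ⟩ hp ⟨s', τ'⟩ hp' h
    simp only [coe_product, coe_filter, mem_univ, true_and, coe_univ, Set.prod_univ,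
      Set.mem_preimage, Set.mem_ofPred_eq] at hp hp' h
    have hττ' : τ' * τ⁻¹ = 1 := by
      refine Equiv.Perm.eq_one_of_strictAnti_comp hp' ?_
      have : s = s' ∘ ⇑(τ' * τ⁻¹) := by
        ext i; simpa using congrFun h (τ⁻¹ i)
      rwa [← this]
    have hτ : τ = τ' := (mul_inv_eq_one.mp hττ').symm
    subst hτ
    simp only [Prod.mk.injEq, and_true]
    exact τ.surjective.injective_comp_right h
  · intro r hr
    simp only [coe_filter, mem_univ, true_and, Set.mem_ofPred_eq] at hr
    set ρ : Equiv.Perm (Fin n) := Tuple.sort r * Fin.revPerm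
    refine ⟨(r ∘ ρ, ρ⁻¹), ?_, ?_⟩
    · simp only [coe_product, coe_filter, mem_univ, true_and, coe_univ, Set.prod_univ,
        Set.mem_preimage, Set.mem_ofPred_eq]
      have hmono : StrictMono (r ∘ Tuple.sort r) :=
        (Tuple.monotone_sort r).strictMono_of_injective (hr.comp (Tuple.sort r).injective)
      exact hmono.comp_strictAnti Fin.rev_strictAnti
    · ext i; simp

open Classical in
theorem Matrix.det_mul_transpose_eq_sum_strictAnti {n : ℕ} {α R : Type*} [LinearOrder α]
    [Fintype α] [CommRing R] (C D : Matrix (Fin n) α R) :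
    (C * Dᵀ).det =
      ∑ s ∈ univ.filter StrictAnti, (C.submatrix id s).det * (D.submatrix id s).det := by
  have hexpand : (C * Dᵀ).det = ∑ r, (C.submatrix id r).det * ∏ i, D i (r i) := by
    simp only [det_apply', mul_apply, transpose_apply, Fintype.prod_sum, prod_mul_distrib,
      mul_sum, sum_mul, submatrix_apply, id]
    rw [sum_comm]
    simp only [mul_assoc]
  rw [hexpand, sum_eq_sum_strictAnti_sum_perm]
  · refine sum_congr rfl fun s _ => ?_
    have hperm (τ : Equiv.Perm (Fin n)) :
        C.submatrix id (s ∘ τ) = (C.submatrix id s).submatrix id τ := rfl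
    simp only [hperm, det_permute', mul_assoc, mul_left_comm _ (C.submatrix id s).det, ← mul_sum]
    rw [← det_transpose (D.submatrix id s), det_apply' (D.submatrix id s)ᵀ]
    rfl
  · intro r hr
    obtain ⟨i, j, hrij, hij⟩ := Function.not_injective_iff.mp hr
    rw [det_zero_of_column_eq hij fun k => by simp [hrij], zero_mul]

theorem Matrix.det_of_ite_eq_strictAnti {n : ℕ} {α R : Type*} [LinearOrder α] [CommRing R]
    {k k' : Fin n → α} (hk : StrictAnti k) (hk' : StrictAnti k') (c : R) :
    (Matrix.of fun i j => if k i = k' j then c else 0).det = c ^ n * if k = k' then 1 else 0 := by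
  rw [det_apply', sum_eq_single (1 : Equiv.Perm (Fin n))]
  · simp only [of_apply, Fintype.prod_ite_zero, prod_const, card_univ, Fintype.card_fin,
      Equiv.Perm.sign_one, Units.val_one, Int.cast_one, one_mul, Equiv.Perm.one_apply,
      funext_iff, mul_ite, mul_one, mul_zero]
  · intro σ _ hσ
    have hne : ¬ ∀ i, k (σ i) = k' i := fun h =>
      hσ (Equiv.Perm.eq_one_of_strictAnti_comp hk (by rwa [show k ∘ σ = k' from funext h]))
    simp only [of_apply, Fintype.prod_ite_zero, if_neg hne, mul_zero]
  · simp

theorem Real.sum_range_cos_odd_mul_mul_two_sin (θ : ℝ) (N : ℕ) :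
    (∑ t ∈ range N, cos ((2 * t + 1) * θ)) * (2 * sin θ) = sin (2 * N * θ) := by
  induction N with
  | zero => simp
  | succ N ih =>
    rw [sum_range_succ, add_mul, ih]
    have h := sin_sub_sin (2 * (N + 1) * θ) (2 * N * θ)
    rw [show (2 * ((N : ℝ) + 1) * θ - 2 * N * θ) / 2 = θ by ring,
      show (2 * ((N : ℝ) + 1) * θ + 2 * N * θ) / 2 = (2 * N + 1) * θ by ring] at h
    push_cast
    linarith

/-- With `θ = mπ/(2N+1)`, `sin (2Nθ) = sin (mπ - θ) = -(-1)^m sin θ`, and `sin θ ≠ 0` because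
`0 < |θ| < π`. -/
theorem Real.sum_range_cos_odd_mul_pi_div (N : ℕ) (m : ℤ) (hm0 : m ≠ 0)
    (hm : |m| < 2 * N + 1) :
    ∑ t ∈ range N, cos ((2 * t + 1) * (π * m / (2 * N + 1))) = -(-1) ^ m / 2 := by
  set θ := π * m / (2 * N + 1)
  have hN : (0 : ℝ) < 2 * N + 1 := by positivity
  have hmR : |(m : ℝ)| < 2 * N + 1 := by exact_mod_cast hm
  have hsin : sin θ ≠ 0 := by
    rw [Ne, sin_eq_zero_iff_of_lt_of_lt]
    · simp [θ, hm0, pi_ne_zero, hN.ne']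
    all_goals
      rw [abs_lt] at hmR
      simp only [θ, lt_div_iff₀ hN, div_lt_iff₀ hN]
      nlinarith [pi_pos]
  have h2N : 2 * N * θ = m * π - θ := by
    simp only [θ]; field_simp; ring
  have h := sum_range_cos_odd_mul_mul_two_sin θ N
  rw [h2N, sin_int_mul_pi_sub] at h
  apply mul_right_cancel₀ (mul_ne_zero two_ne_zero hsin)
  rw [h]; ring

theorem Real.sum_cos_mul_cos_dct8_nodes (N a b : ℕ) (ha : a < N) (hb : b < N) :
    ∑ t : Fin N, cos (π * ((a : ℝ) + 1 / 2) * (2 * (((t : ℕ) : ℝ) + 1 / 2) / (2 * N + 1))) *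
        cos (π * ((b : ℝ) + 1 / 2) * (2 * (((t : ℕ) : ℝ) + 1 / 2) / (2 * N + 1)))
      = if a = b then (2 * (N : ℝ) + 1) / 4 else 0 := by
  set θ₁ := π * (((a - b : ℤ)) : ℝ) / (2 * N + 1)
  set θ₂ := π * (((a + b + 1 : ℤ)) : ℝ) / (2 * N + 1)
  have hprod (t : ℕ) :
      cos (π * ((a : ℝ) + 1 / 2) * (2 * ((t : ℝ) + 1 / 2) / (2 * N + 1))) *
        cos (π * ((b : ℝ) + 1 / 2) * (2 * ((t : ℝ) + 1 / 2) / (2 * N + 1)))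
      = (cos ((2 * t + 1) * θ₁) + cos ((2 * t + 1) * θ₂)) / 2 := by
    have hN : (2 * N + 1 : ℝ) ≠ 0 := by positivity
    rw [show (2 * (t : ℝ) + 1) * θ₁
        = π * ((a : ℝ) + 1 / 2) * (2 * ((t : ℝ) + 1 / 2) / (2 * N + 1))
          - π * ((b : ℝ) + 1 / 2) * (2 * ((t : ℝ) + 1 / 2) / (2 * N + 1)) by
        simp only [θ₁]; push_cast; field_simp; ring,
      show (2 * (t : ℝ) + 1) * θ₂
        = π * ((a : ℝ) + 1 / 2) * (2 * ((t : ℝ) + 1 / 2) / (2 * N + 1))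
          + π * ((b : ℝ) + 1 / 2) * (2 * ((t : ℝ) + 1 / 2) / (2 * N + 1)) by
        simp only [θ₂]; push_cast; field_simp; ring,
      cos_sub, cos_add]
    ring
  rw [Fin.sum_univ_eq_sum_range (fun t : ℕ =>
      cos (π * ((a : ℝ) + 1 / 2) * (2 * ((t : ℝ) + 1 / 2) / (2 * N + 1))) *
        cos (π * ((b : ℝ) + 1 / 2) * (2 * ((t : ℝ) + 1 / 2) / (2 * N + 1)))),
    sum_congr rfl fun t _ => hprod t, ← sum_div, sum_add_distrib,
    sum_range_cos_odd_mul_pi_div N (a + b + 1) (by omega) (by rw [abs_lt]; omega)]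
  split_ifs with hab
  · subst hab
    have hodd : (-1 : ℝ) ^ ((a : ℤ) + a + 1) = -1 := Odd.neg_one_zpow ⟨a, by ring⟩
    simp only [θ₁, sub_self, Int.cast_zero, mul_zero, zero_div, cos_zero, sum_const,
      card_range, nsmul_eq_mul, mul_one, hodd]
    ring
  · have hflip : (-1 : ℝ) ^ ((a : ℤ) + b + 1) = -(-1) ^ ((a : ℤ) - b) := by
      rw [show (a : ℤ) + b + 1 = (a - b) + (2 * b + 1) by ring, zpow_add₀ (by norm_num),
        Odd.neg_one_zpow ⟨b, rfl⟩, mul_neg_one]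
    rw [sum_range_cos_odd_mul_pi_div N (a - b) (by omega) (by rw [abs_lt]; omega), hflip]
    ring

noncomputable def cosMatrix {n : ℕ} {ι : Type*} (lam : Fin n → ℝ) (x : ι → ℝ) :
    Matrix (Fin n) ι ℝ :=
  Matrix.of fun i t => cos (π * lam i * x t)

theorem cosMinus_comp_eq_det {n : ℕ} {ι : Type*} (lam : Fin n → ℝ) (x : ι → ℝ)
    (r : Fin n → ι) : cosMinus n lam (x ∘ r) = ((cosMatrix lam x).submatrix id r).det := by
  rw [Matrix.det_apply']
  rfl

theorem AMDCT_VIII_orthogonality_general (n N : ℕ) (hN : 1 ≤ N)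
    (k k' : Fin n → ℕ)
    (hk : ∀ i j : Fin n, i < j → k j < k i) (hkb : ∀ i, k i ≤ N - 1)
    (hk' : ∀ i j : Fin n, i < j → k' j < k' i) (hk'b : ∀ i, k' i ≤ N - 1) :
    ∑ r ∈ Finset.univ.filter
        (fun r : Fin n → Fin N => ∀ i j : Fin n, i < j → (r j : ℕ) < (r i : ℕ)),
      cosMinus n (fun i => (k i : ℝ) + 1 / 2)
          (fun i => 2 * (((r i : ℕ) : ℝ) + 1 / 2) / (2 * N + 1)) *
        cosMinus n (fun i => (k' i : ℝ) + 1 / 2)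
          (fun i => 2 * (((r i : ℕ) : ℝ) + 1 / 2) / (2 * N + 1))
      = ((2 * (N : ℝ) + 1) / 4) ^ n * (if k = k' then (1 : ℝ) else 0) := by
  classical
  set x : Fin N → ℝ := fun t => 2 * (((t : ℕ) : ℝ) + 1 / 2) / (2 * N + 1)
  set C := cosMatrix (fun i => (k i : ℝ) + 1 / 2) x
  set D := cosMatrix (fun i => (k' i : ℝ) + 1 / 2) x
  have hfilter : univ.filter (fun r : Fin n → Fin N => ∀ i j : Fin n, i < j → (r j : ℕ) < r i)
      = univ.filter StrictAnti := by
    ext r; simp [StrictAnti]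
  have hgram : C * Dᵀ = of fun i j => if k i = k' j then (2 * (N : ℝ) + 1) / 4 else 0 := by
    ext i j
    exact sum_cos_mul_cos_dct8_nodes N (k i) (k' j) (by grind) (by grind)
  calc _ = ∑ r ∈ univ.filter StrictAnti, (C.submatrix id r).det * (D.submatrix id r).det :=
        sum_congr hfilter fun r _ => by rw [← cosMinus_comp_eq_det, ← cosMinus_comp_eq_det]; rfl
    _ = (C * Dᵀ).det := (det_mul_transpose_eq_sum_strictAnti C D).symm
    _ = _ := by rw [hgram, det_of_ite_eq_strictAnti hk hk']

theorem AMDCT_VIII_orthogonality (n N : ℕ) (hn : 1 ≤ n) (hN : 1 ≤ N)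
    (k k' : Fin n → ℕ)
    (hk : ∀ i j : Fin n, i < j → k j < k i) (hkb : ∀ i, k i ≤ N - 1)
    (hk' : ∀ i j : Fin n, i < j → k' j < k' i) (hk'b : ∀ i, k' i ≤ N - 1) :
    ∑ r ∈ Finset.univ.filter
        (fun r : Fin n → Fin N => ∀ i j : Fin n, i < j → (r j : ℕ) < (r i : ℕ)),
      cosMinus n (fun i => (k i : ℝ) + 1 / 2)
          (fun i => 2 * (((r i : ℕ) : ℝ) + 1 / 2) / (2 * N + 1)) *
        cosMinus n (fun i => (k' i : ℝ) + 1 / 2)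
          (fun i => 2 * (((r i : ℕ) : ℝ) + 1 / 2) / (2 * N + 1))
      = ((2 * (N : ℝ) + 1) / 4) ^ n * (if k = k' then (1 : ℝ) else 0) :=
  AMDCT_VIII_orthogonality_general n N hN k k' hk hkb hk' hk'b
end
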